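/- arXiv:0803.3646 — 2 statements merged into one kernel-verified Lean document; each statement's English description precedes it below -/
import Mathlib

section
/- Let X be a Banach space and h(t) = Σ_{k=0}^{p^{2N}−1} p^{N/2} 1_{B[k/p^N, p^{−N}]}(t) x_k with x_k ∈ X. Then the Bochner L² norm of its Fourier transform satisfies ‖𝓕h‖²_{L²(ℚ_p,X)} = ∫_{ℤ_p} ‖Σ_{k=0}^{p^{2N}−1} χ_p(k t / p^{2N}) x_k‖² dt. -/
open MeasureTheory Metric Finset
open scoped ENNReal NNReal Classical

noncomputable def padicDigit {p : ℕ} [Fact p.Prime] (x : ℤ_[p]) (k : ℕ) : ℕ :=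
  x.appr (k+1) / p^k

noncomputable def padicTau {p : ℕ} [Fact p.Prime] (x : ℤ_[p]) : ℝ :=
  ∑' k : ℕ, (padicDigit x k : ℝ) / (p:ℝ)^(k+1)

noncomputable def padicFrac {p : ℕ} [Fact p.Prime] (x : ℚ_[p]) : ℚ :=
  if h : ‖x * (p:ℚ_[p])^((-x.valuation).toNat)‖ ≤ 1 then
    ((PadicInt.appr (⟨x * (p:ℚ_[p])^((-x.valuation).toNat), h⟩ : ℤ_[p]) ((-x.valuation).toNat) : ℚ)
      / (p:ℚ)^((-x.valuation).toNat))
  else 0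

noncomputable def padicChar {p : ℕ} [Fact p.Prime] (x : ℚ_[p]) : ℂ :=
  Complex.exp (2 * Real.pi * Complex.I * ((padicFrac x : ℚ) : ℂ))

def IsHilbertizable (X : Type*) [NormedAddCommGroup X] [NormedSpace ℂ X] : Prop :=
  ∃ (H : Type) (_ : NormedAddCommGroup H) (_ : InnerProductSpace ℂ H) (_ : CompleteSpace H),
    Nonempty (X ≃L[ℂ] H)

noncomputable def rademacherZp {p : ℕ} [Fact p.Prime] (i : ℕ) (t : ℤ_[p]) : ℝ :=
  Real.sign (Real.sin (2^i * Real.pi * padicTau t))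

noncomputable def padicFourier {p : ℕ} [Fact p.Prime] [MeasurableSpace ℚ_[p]]
    (μ : Measure ℚ_[p]) {X : Type*} [NormedAddCommGroup X] [NormedSpace ℂ X]
    (f : ℚ_[p] → X) : ℚ_[p] → X :=
  fun s => ∫ t, padicChar (s * t) • f t ∂μ

/- The character `padicChar` is additive and trivial on `ℤ_[p]`. Hence on a ball of radius
`p ^ (-N)` the function `t ↦ padicChar (s * t)` is constant when `‖s‖ ≤ p ^ N`, while for larger
`‖s‖` translating the ball by some `u` in it with `padicChar (s * u) ≠ 1` shows that its integral
vanishes. So the Fourier transform of `h` is `p ^ (-N/2)` times the indicator of the ball of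
radius `p ^ N` times `∑ padicChar (s * k / p ^ N) • x k`, and the substitution `s = t / p ^ N`,
which scales Haar measure by `p ^ N`, turns its squared `L²` norm into the integral over `ℤ_[p]`.
That Haar measure scales by the norm, `μ (c • A) = ‖c‖ * μ A`, comes from `ℤ_[p]` being the
disjoint union of the `p` balls `j + p ℤ_[p]`, `j < p`. -/

lemma integral_norm_indicator_smul_sq {α E : Type*} [MeasurableSpace α] {μ : Measure α}
    [NormedAddCommGroup E] [NormedSpace ℝ E] {s : Set α} (hs : MeasurableSet s) (a : ℝ)
    (f : α → E) :
    ∫ x, ‖s.indicator (fun x => a • f x) x‖ ^ 2 ∂μ = a ^ 2 * ∫ x in s, ‖f x‖ ^ 2 ∂μ := by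
  rw [← integral_const_mul, ← integral_indicator hs]
  congr 1 with x
  rw [norm_indicator_eq_indicator_norm]
  by_cases hx : x ∈ s
  · simp [Set.indicator_of_mem hx, norm_smul, mul_pow]
  · simp [Set.indicator_of_notMem hx]

lemma sq_zpow_neg_mul_rpow_half {b : ℝ} (hb : 0 < b) (N : ℕ) :
    (b ^ (-(N : ℤ)) * b ^ ((N : ℝ) / 2)) ^ 2 = b ^ (-(N : ℤ)) := by
  have hhalf : (b ^ ((N : ℝ) / 2)) ^ 2 = b ^ N := by
    rw [← Real.rpow_natCast, ← Real.rpow_mul hb.le, ← Real.rpow_natCast]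
    ring_nf
  rw [mul_pow, hhalf, zpow_neg, zpow_natCast]
  field_simp

variable {p : ℕ} [Fact p.Prime]

lemma natCast_prime_pos : (0 : ℝ) < p := mod_cast (Fact.out : p.Prime).pos

/-- `ℤ[1/p]` as an additive subgroup of `ℚ`. -/
def ratPowDen (p : ℕ) : AddSubgroup ℚ where
  carrier := {q | ∃ (m : ℕ) (a : ℤ), q * p ^ m = a}
  add_mem' := by
    rintro q r ⟨m, a, ha⟩ ⟨n, b, hb⟩
    exact ⟨m + n, a * p ^ n + b * p ^ m, by push_cast; rw [← ha, ← hb]; ring⟩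
  zero_mem' := ⟨0, 0, by simp⟩
  neg_mem' := by
    rintro q ⟨m, a, ha⟩
    exact ⟨m, -a, by push_cast; rw [← ha]; ring⟩

lemma exists_int_eq_of_mem_ratPowDen {q : ℚ} (hq : q ∈ ratPowDen p) (h : ‖(q : ℚ_[p])‖ ≤ 1) :
    ∃ c : ℤ, q = c := by
  obtain ⟨m, a, ha⟩ := hq
  have hp : (p : ℚ) ^ m ≠ 0 := pow_ne_zero _ (Nat.cast_ne_zero.mpr (Fact.out : p.Prime).ne_zero)
  have hnorm : ‖(a : ℚ_[p])‖ ≤ (p : ℝ) ^ (-(m : ℤ)) := by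
    have : (a : ℚ_[p]) = (q : ℚ_[p]) * (p : ℚ_[p]) ^ m := by exact_mod_cast ha.symm
    rw [this, norm_mul, Padic.norm_p_pow]
    exact mul_le_of_le_one_left (by positivity) h
  obtain ⟨c, rfl⟩ := (Padic.norm_int_le_pow_iff_dvd a m).mp hnorm
  exact ⟨c, mul_right_cancel₀ hp (by rw [ha]; push_cast; ring)⟩

lemma norm_mul_p_pow_neg_valuation_le_one (x : ℚ_[p]) :
    ‖x * (p : ℚ_[p]) ^ (-x.valuation).toNat‖ ≤ 1 := by
  rcases eq_or_ne x 0 with rfl | hx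
  · simp
  rw [norm_mul, Padic.norm_eq_zpow_neg_valuation hx, Padic.norm_p_pow,
    ← zpow_add₀ (by exact_mod_cast (Fact.out : p.Prime).ne_zero)]
  exact zpow_le_one_of_nonpos₀ (by exact_mod_cast (Fact.out : p.Prime).one_lt.le)
    (by have := Int.self_le_toNat (-x.valuation); omega)

lemma exists_padicFrac_eq (x : ℚ_[p]) : ∃ (m : ℕ) (z : ℤ_[p]), (z : ℚ_[p]) = x * (p : ℚ_[p]) ^ m ∧
    padicFrac x = (z.appr m : ℚ) / (p : ℚ) ^ m :=
  ⟨_, ⟨_, norm_mul_p_pow_neg_valuation_le_one x⟩, rfl,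
    by rw [padicFrac, dif_pos (norm_mul_p_pow_neg_valuation_le_one x)]⟩

lemma padicFrac_mem_ratPowDen (x : ℚ_[p]) : padicFrac x ∈ ratPowDen p := by
  obtain ⟨m, z, -, hx⟩ := exists_padicFrac_eq x
  have hp : (p : ℚ) ^ m ≠ 0 := pow_ne_zero _ (Nat.cast_ne_zero.mpr (Fact.out : p.Prime).ne_zero)
  exact ⟨m, z.appr m, by rw [hx, div_mul_cancel₀ _ hp]; simp⟩

lemma norm_sub_padicFrac_le_one (x : ℚ_[p]) : ‖x - (padicFrac x : ℚ_[p])‖ ≤ 1 := by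
  obtain ⟨m, z, hz, hx⟩ := exists_padicFrac_eq x
  have hp : (p : ℚ_[p]) ^ m ≠ 0 := pow_ne_zero _ (by exact_mod_cast (Fact.out : p.Prime).ne_zero)
  have hspec : ‖z - (z.appr m : ℤ_[p])‖ ≤ (p : ℝ) ^ (-(m : ℤ)) :=
    (PadicInt.norm_le_pow_iff_mem_span_pow _ m).mpr (PadicInt.appr_spec m z)
  have : x - (padicFrac x : ℚ_[p]) = ((z - (z.appr m : ℤ_[p]) : ℤ_[p]) : ℚ_[p]) / (p : ℚ_[p]) ^ m := by
    rw [hx]; push_cast; rw [hz]; field_simp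
  rw [this, norm_div, Padic.norm_p_pow, PadicInt.padic_norm_e_of_padicInt]
  rwa [div_le_one (zpow_pos natCast_prime_pos _)]

lemma padicChar_eq_exp {x : ℚ_[p]} {q : ℚ} (hq : q ∈ ratPowDen p)
    (hx : ‖x - (q : ℚ_[p])‖ ≤ 1) :
    padicChar x = Complex.exp (2 * Real.pi * Complex.I * q) := by
  obtain ⟨c, hc⟩ : ∃ c : ℤ, padicFrac x - q = c := by
    refine exists_int_eq_of_mem_ratPowDen (sub_mem (padicFrac_mem_ratPowDen x) hq) ?_
    have : ((padicFrac x - q : ℚ) : ℚ_[p]) = (x - q) + -(x - padicFrac x) := by push_cast; ring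
    rw [this]
    exact (IsUltrametricDist.norm_add_le_max _ _).trans
      (max_le hx ((norm_neg _).trans_le (norm_sub_padicFrac_le_one x)))
  rw [padicChar, sub_eq_iff_eq_add'.mp hc]
  push_cast
  rw [mul_add, Complex.exp_add, mul_comm _ (c : ℂ), Complex.exp_int_mul_two_pi_mul_I, mul_one]

lemma padicChar_eq_one_of_norm_le_one {x : ℚ_[p]} (h : ‖x‖ ≤ 1) : padicChar x = 1 := by
  simpa using padicChar_eq_exp (zero_mem (ratPowDen p)) (x := x) (by simpa using h)

lemma padicChar_add (x y : ℚ_[p]) : padicChar (x + y) = padicChar x * padicChar y := by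
  have hxy : ‖x + y - ((padicFrac x + padicFrac y : ℚ) : ℚ_[p])‖ ≤ 1 := by
    have : x + y - ((padicFrac x + padicFrac y : ℚ) : ℚ_[p]) =
        (x - padicFrac x) + (y - padicFrac y) := by push_cast; ring
    rw [this]
    exact (IsUltrametricDist.norm_add_le_max _ _).trans
      (max_le (norm_sub_padicFrac_le_one x) (norm_sub_padicFrac_le_one y))
  rw [padicChar_eq_exp (add_mem (padicFrac_mem_ratPowDen x) (padicFrac_mem_ratPowDen y)) hxy,
    padicChar, padicChar, ← Complex.exp_add]
  push_cast
  ring_nf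

lemma padicChar_eq_of_norm_sub_le_one {x y : ℚ_[p]} (h : ‖x - y‖ ≤ 1) :
    padicChar x = padicChar y := by
  rw [← sub_add_cancel x y, padicChar_add, padicChar_eq_one_of_norm_le_one h, one_mul]

lemma continuous_padicChar : Continuous (padicChar (p := p)) :=
  continuous_iff_continuousAt.mpr fun x =>
    (Filter.eventuallyEq_of_mem (ball_mem_nhds x one_pos) fun _ hy =>
      padicChar_eq_of_norm_sub_le_one (mem_ball_iff_norm.mp hy).le).continuousAt

lemma norm_padicChar (x : ℚ_[p]) : ‖padicChar x‖ = 1 := by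
  rw [padicChar, Complex.norm_exp]
  simp

lemma padicChar_inv_p_ne_one : padicChar (p⁻¹ : ℚ_[p]) ≠ 1 := by
  have hq : ((p : ℚ)⁻¹ : ℚ) ∈ ratPowDen p := ⟨1, 1, by simp [(Fact.out : p.Prime).ne_zero]⟩
  rw [padicChar_eq_exp hq (by simp)]
  intro h
  obtain ⟨n, hn⟩ := Complex.exp_eq_one_iff.mp h
  have hn : ((p : ℚ)⁻¹ : ℚ) = n := by
    have h2πi : (2 * Real.pi * Complex.I : ℂ) ≠ 0 := by simp [Real.pi_ne_zero]
    have : (((p : ℚ)⁻¹ : ℚ) : ℂ) = (n : ℂ) := mul_left_cancel₀ h2πi (by rw [hn]; ring)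
    exact_mod_cast this
  have hp : (1 : ℚ) < p := mod_cast (Fact.out : p.Prime).one_lt
  have h0 : (0 : ℚ) < n := hn ▸ by positivity
  have h1 : (n : ℚ) < 1 := hn ▸ inv_lt_one_of_one_lt₀ hp
  have : (0 : ℤ) < n ∧ n < 1 := ⟨mod_cast h0, mod_cast h1⟩
  omega

open scoped Pointwise

lemma closedBall_zero_one_eq_biUnion :
    closedBall (0 : ℚ_[p]) 1 = ⋃ j ∈ Finset.range p, closedBall (j : ℚ_[p]) (p : ℝ)⁻¹ := by
  ext x
  simp only [Set.mem_iUnion, Finset.mem_range, mem_closedBall_zero_iff, exists_prop]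
  constructor
  · intro hx
    obtain ⟨j, hj, hmem⟩ := PadicInt.exists_mem_range (⟨x, hx⟩ : ℤ_[p])
    refine ⟨j, hj, ?_⟩
    have := (PadicInt.norm_le_pow_iff_norm_lt_pow_add_one _ (-1)).mpr
      (by simpa using PadicInt.mem_nonunits.mp hmem)
    rw [PadicInt.norm_def] at this
    rwa [mem_closedBall, dist_eq_norm, ← zpow_neg_one]
  · rintro ⟨j, -, hj⟩
    calc ‖x‖ = ‖(x - j) + j‖ := by rw [sub_add_cancel]
      _ ≤ max ‖x - j‖ ‖(j : ℚ_[p])‖ := IsUltrametricDist.norm_add_le_max _ _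
      _ ≤ 1 := max_le ((mem_closedBall_iff_norm.mp hj).trans
          (inv_le_one_of_one_le₀ (mod_cast (Fact.out : p.Prime).one_lt.le)))
          (IsUltrametricDist.norm_natCast_le_one _ j)

lemma pairwiseDisjoint_closedBall_natCast :
    (Finset.range p : Set ℕ).PairwiseDisjoint fun j => closedBall (j : ℚ_[p]) (p : ℝ)⁻¹ := by
  intro j hj j' hj' hne
  refine Set.disjoint_left.mpr fun y hy hy' => hne ?_
  have hdist : ‖((j' - j : ℤ) : ℚ_[p])‖ < 1 := by
    rw [mem_closedBall] at hy hy'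
    calc ‖((j' - j : ℤ) : ℚ_[p])‖ = dist (j' : ℚ_[p]) j := by push_cast; rw [dist_eq_norm]
      _ ≤ max (dist (j' : ℚ_[p]) y) (dist y j) := IsUltrametricDist.dist_triangle_max _ _ _
      _ ≤ (p : ℝ)⁻¹ := max_le (dist_comm y (j' : ℚ_[p]) ▸ hy') hy
      _ < 1 := inv_lt_one_of_one_lt₀ (mod_cast (Fact.out : p.Prime).one_lt)
  exact Nat.ModEq.eq_of_lt_of_lt (Nat.modEq_iff_dvd.mpr (Padic.norm_intCast_lt_one_iff.mp hdist))
    (by simpa using hj) (by simpa using hj')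

lemma addHaar_closedBall_one_eq_mul [MeasurableSpace ℚ_[p]] [BorelSpace ℚ_[p]]
    (μ : Measure ℚ_[p]) [μ.IsAddHaarMeasure] :
    μ (closedBall 0 1) = p * μ (closedBall 0 (p : ℝ)⁻¹) := by
  rw [closedBall_zero_one_eq_biUnion, measure_biUnion_finset pairwiseDisjoint_closedBall_natCast
    fun _ _ => measurableSet_closedBall]
  simp_rw [Measure.addHaar_closedBall_center]
  rw [Finset.sum_const, Finset.card_range, nsmul_eq_mul]

lemma distribHaarChar_padic_eq_nnnorm (u : ℚ_[p]ˣ) : distribHaarChar ℚ_[p] u = ‖(u : ℚ_[p])‖₊ := by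
  borelize ℚ_[p]
  set μ : Measure ℚ_[p] := Measure.addHaar
  have hB0 : μ (closedBall 0 1) ≠ 0 := (measure_closedBall_pos μ 0 one_pos).ne'
  have hBtop : μ (closedBall 0 1) ≠ ∞ := (isCompact_closedBall 0 1).measure_lt_top.ne
  have hsmul (v : ℚ_[p]ˣ) : v • closedBall (0 : ℚ_[p]) 1 = closedBall 0 ‖(v : ℚ_[p])‖ := by
    rw [Units.smul_def, smul_closedBall' v.ne_zero, smul_zero, mul_one]
  have hp : (p : ℚ_[p]) ≠ 0 := mod_cast (Fact.out : p.Prime).ne_zero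
  set P := Units.mk0 (p : ℚ_[p]) hp
  have hP : distribHaarChar ℚ_[p] P = (p : ℝ≥0)⁻¹ := by
    refine distribHaarChar_eq_of_measure_smul_eq_mul hB0 hBtop ?_
    rw [hsmul, Units.val_mk0, Padic.norm_p, addHaar_closedBall_one_eq_mul μ, ← mul_assoc,
      ENNReal.coe_inv (mod_cast (Fact.out : p.Prime).ne_zero), ENNReal.coe_natCast,
      ENNReal.inv_mul_cancel (mod_cast (Fact.out : p.Prime).ne_zero) (ENNReal.natCast_ne_top p),
      one_mul]
  refine distribHaarChar_eq_of_measure_smul_eq_mul hB0 hBtop ?_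
  have hu : ‖(u : ℚ_[p])‖ = ‖((P ^ (u : ℚ_[p]).valuation : ℚ_[p]ˣ) : ℚ_[p])‖ := by
    rw [Units.val_zpow_eq_zpow_val, Units.val_mk0, Padic.norm_p_zpow,
      Padic.norm_eq_zpow_neg_valuation u.ne_zero]
  rw [hsmul, hu, ← hsmul, ← distribHaarChar_mul, map_zpow, hP]
  congr 2
  ext
  push_cast
  rw [Padic.norm_eq_zpow_neg_valuation u.ne_zero, inv_zpow']

section HaarMeasure

variable [MeasurableSpace ℚ_[p]] [BorelSpace ℚ_[p]] (μ : Measure ℚ_[p]) [μ.IsAddHaarMeasure]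

lemma addHaar_smul {c : ℚ_[p]} (hc : c ≠ 0) (s : Set ℚ_[p]) : μ (c • s) = ‖c‖₊ * μ s := by
  have := distribHaarChar_mul μ (Units.mk0 c hc) s
  rw [distribHaarChar_padic_eq_nnnorm] at this
  exact this.symm

lemma map_mul_left_eq_smul {c : ℚ_[p]} (hc : c ≠ 0) : μ.map (c * ·) = ‖c‖₊⁻¹ • μ := by
  ext s hs
  have hpre : (c * ·) ⁻¹' s = c⁻¹ • s := Set.preimage_smul₀ hc s
  rw [Measure.map_apply (continuous_const_mul c).measurable hs, hpre,
    addHaar_smul μ (inv_ne_zero hc), nnnorm_inv, Measure.smul_apply, ENNReal.smul_def, smul_eq_mul]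

lemma setIntegral_closedBall_comp_mul_left {E : Type*} [NormedAddCommGroup E] [NormedSpace ℝ E]
    {c : ℚ_[p]} (hc : c ≠ 0) (f : ℚ_[p] → E) (r : ℝ) :
    ∫ t in closedBall 0 r, f (c * t) ∂μ = ‖c‖⁻¹ • ∫ y in closedBall 0 (‖c‖ * r), f y ∂μ := by
  have hpre : (c * ·) ⁻¹' closedBall 0 (‖c‖ * r) = closedBall 0 r := by
    ext t
    simp [norm_mul, norm_pos_iff.mpr hc]
  have := setIntegral_map_equiv (μ := μ) (MeasurableEquiv.mulLeft₀ c hc) f (closedBall 0 (‖c‖ * r))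
  rw [MeasurableEquiv.coe_mulLeft₀, hpre, map_mul_left_eq_smul μ hc, Measure.restrict_smul,
    integral_smul_nnreal_measure] at this
  rw [← this, NNReal.smul_def, NNReal.coe_inv, coe_nnnorm]

lemma measureReal_closedBall_zpow (hμ : μ (closedBall 0 1) = 1) (c : ℚ_[p]) (n : ℤ) :
    μ.real (closedBall c ((p : ℝ) ^ n)) = (p : ℝ) ^ n := by
  have hp : ((p : ℚ_[p]) ^ (-n)) ≠ 0 := zpow_ne_zero _ (mod_cast (Fact.out : p.Prime).ne_zero)
  have hball : closedBall (0 : ℚ_[p]) ((p : ℝ) ^ n) = ((p : ℚ_[p]) ^ (-n)) • closedBall 0 1 := by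
    rw [smul_closedBall' hp, smul_zero, Padic.norm_p_zpow, neg_neg, mul_one]
  rw [measureReal_def, Measure.addHaar_closedBall_center, hball, addHaar_smul μ hp, hμ, mul_one,
    ENNReal.coe_toReal, coe_nnnorm, Padic.norm_p_zpow, neg_neg]

end HaarMeasure

section Fourier

variable [MeasurableSpace ℚ_[p]] [BorelSpace ℚ_[p]] (μ : Measure ℚ_[p])

lemma setIntegral_closedBall_padicChar_mul_of_norm_mul_le (c s : ℚ_[p]) {r : ℝ}
    (hsr : ‖s‖ * r ≤ 1) :
    ∫ t in closedBall c r, padicChar (s * t) ∂μ = μ.real (closedBall c r) • padicChar (s * c) := by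
  rw [← setIntegral_const]
  refine setIntegral_congr_fun measurableSet_closedBall fun t ht => ?_
  refine padicChar_eq_of_norm_sub_le_one ?_
  rw [← mul_sub, norm_mul]
  exact (mul_le_mul_of_nonneg_left (mem_closedBall_iff_norm.mp ht) (norm_nonneg s)).trans hsr

lemma setIntegral_closedBall_padicChar_mul_eq_zero [μ.IsAddHaarMeasure] (c s : ℚ_[p]) {r : ℝ}
    {u : ℚ_[p]} (hu : ‖u‖ ≤ r) (hsu : padicChar (s * u) ≠ 1) :
    ∫ t in closedBall c r, padicChar (s * t) ∂μ = 0 := by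
  have hpre : (· + u) ⁻¹' closedBall c r = closedBall c r := by
    rw [preimage_add_right_closedBall, ← IsUltrametricDist.closedBall_eq_of_mem]
    rwa [mem_closedBall, dist_eq_norm, sub_sub_cancel_left, norm_neg]
  have hshift := (measurePreserving_add_right μ u).setIntegral_preimage_emb
    (measurableEmbedding_addRight u) (fun t => padicChar (s * t)) (closedBall c r)
  simp only [hpre, mul_add, padicChar_add, integral_mul_const] at hshift
  have : (∫ t in closedBall c r, padicChar (s * t) ∂μ) * (padicChar (s * u) - 1) = 0 := by
    rw [mul_sub, hshift, mul_one, sub_self]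
  exact (mul_eq_zero.mp this).resolve_right (sub_ne_zero.mpr hsu)

variable {X : Type*} [NormedAddCommGroup X] [NormedSpace ℂ X]

lemma padicFourier_finsetSum {ι : Type*} (I : Finset ι) (f : ι → ℚ_[p] → X)
    (hf : ∀ i ∈ I, Integrable (f i) μ) :
    padicFourier μ (fun t => ∑ i ∈ I, f i t) = fun s => ∑ i ∈ I, padicFourier μ (f i) s := by
  funext s
  simp only [padicFourier, Finset.smul_sum]
  refine integral_finsetSum I fun i hi => (hf i hi).bdd_smul 1 ?_ (ae_of_all _ fun t => ?_)
  · exact (continuous_padicChar.comp (continuous_const_mul s)).aestronglyMeasurable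
  · exact (norm_padicChar _).le

lemma padicFourier_indicator_closedBall [CompleteSpace X] [μ.IsAddHaarMeasure]
    (hμ : μ (closedBall 0 1) = 1) (c : ℚ_[p]) (n : ℤ) (v : X) :
    padicFourier μ ((closedBall c ((p : ℝ) ^ (-n))).indicator fun _ => v) =
      (closedBall 0 ((p : ℝ) ^ n)).indicator fun s => ((p : ℝ) ^ (-n) • padicChar (s * c)) • v := by
  funext s
  simp only [padicFourier]
  simp_rw [← Set.indicator_smul_apply _ (fun t => padicChar (s * t)),
    integral_indicator measurableSet_closedBall, integral_smul_const]
  have hp : (0 : ℝ) < p := natCast_prime_pos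
  by_cases hs : ‖s‖ ≤ (p : ℝ) ^ n
  · rw [Set.indicator_of_mem (mem_closedBall_zero_iff.mpr hs),
      setIntegral_closedBall_padicChar_mul_of_norm_mul_le μ c s, measureReal_closedBall_zpow μ hμ]
    calc ‖s‖ * (p : ℝ) ^ (-n) ≤ (p : ℝ) ^ n * (p : ℝ) ^ (-n) := by gcongr
      _ = 1 := by rw [← zpow_add₀ hp.ne', add_neg_cancel, zpow_zero]
  have hs' : (p : ℝ) ^ (n + 1) ≤ ‖s‖ :=
    not_lt.mp (mt (Padic.norm_le_pow_iff_norm_lt_pow_add_one s n).mpr hs)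
  have hs0 : s ≠ 0 := norm_pos_iff.mp ((zpow_pos hp _).trans_le hs')
  rw [Set.indicator_of_notMem (mt mem_closedBall_zero_iff.mp hs),
    setIntegral_closedBall_padicChar_mul_eq_zero μ c s (u := ((p : ℚ_[p]) * s)⁻¹), zero_smul]
  · rw [norm_inv, norm_mul, Padic.norm_p,
      inv_le_comm₀ (by positivity) (zpow_pos hp _), ← zpow_neg, neg_neg]
    calc (p : ℝ) ^ n = (p : ℝ)⁻¹ * (p : ℝ) ^ (n + 1) := by
          rw [zpow_add_one₀ hp.ne', mul_comm, mul_inv_cancel_right₀ hp.ne']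
      _ ≤ (p : ℝ)⁻¹ * ‖s‖ := by gcongr
  · rw [mul_inv, mul_left_comm, mul_inv_cancel₀ hs0, mul_one]
    exact padicChar_inv_p_ne_one

lemma padicFourier_sum_smul_indicator_closedBall [CompleteSpace X] [μ.IsAddHaarMeasure]
    (hμ : μ (closedBall 0 1) = 1) {ι : Type*} (I : Finset ι) (a : ℝ) (c : ι → ℚ_[p]) (n : ℤ)
    (v : ι → X) :
    padicFourier μ (fun t => ∑ i ∈ I, a • (closedBall (c i) ((p : ℝ) ^ (-n))).indicator
        (fun _ => v i) t) =
      (closedBall 0 ((p : ℝ) ^ n)).indicator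
        fun s => ((p : ℝ) ^ (-n) * a) • ∑ i ∈ I, padicChar (s * c i) • v i := by
  simp_rw [← Set.indicator_const_smul_apply]
  rw [padicFourier_finsetSum μ _ _ fun i _ => (integrableOn_const
    (isCompact_closedBall _ _).measure_lt_top.ne).integrable_indicator measurableSet_closedBall]
  simp_rw [padicFourier_indicator_closedBall μ hμ]
  funext s
  by_cases hs : s ∈ closedBall (0 : ℚ_[p]) ((p : ℝ) ^ n)
  · simp only [Set.indicator_of_mem hs, Finset.smul_sum]
    refine Finset.sum_congr rfl fun i _ => ?_
    rw [smul_assoc, mul_smul, smul_comm (padicChar _) a]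
  · simp only [Set.indicator_of_notMem hs, Finset.sum_const_zero]

end Fourier

theorem stmt14_general {p : ℕ} [Fact p.Prime] [MeasurableSpace ℚ_[p]] [BorelSpace ℚ_[p]]
    (μ : Measure ℚ_[p]) [μ.IsAddHaarMeasure] (hμ : μ (Metric.closedBall 0 1) = 1)
    {X : Type*} [NormedAddCommGroup X] [NormedSpace ℂ X] [CompleteSpace X]
    (N : ℕ) (x : ℕ → X) :
    ∫ s, ‖padicFourier μ (fun t => ∑ k ∈ Finset.range (p^(2*N)),
        (p:ℝ)^((N:ℝ)/2) • Set.indicator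
          (Metric.closedBall ((k:ℚ_[p]) / (p:ℚ_[p])^N) ((p:ℝ)^(-(N:ℤ)))) (fun _ => x k) t) s‖^2 ∂μ
      = ∫ t in Metric.closedBall (0:ℚ_[p]) 1,
          ‖∑ k ∈ Finset.range (p^(2*N)), padicChar ((k:ℚ_[p]) * t / (p:ℚ_[p])^(2*N)) • x k‖^2 ∂μ := by
  set c : ℚ_[p] := ((p : ℚ_[p]) ^ N)⁻¹
  set G : ℚ_[p] → X := fun s => ∑ k ∈ Finset.range (p ^ (2 * N)),
    padicChar (s * ((k : ℚ_[p]) / (p : ℚ_[p]) ^ N)) • x k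
  have hc : c ≠ 0 := inv_ne_zero (pow_ne_zero _ (mod_cast (Fact.out : p.Prime).ne_zero))
  have hnc : ‖c‖ = (p : ℝ) ^ (N : ℤ) := by
    rw [norm_inv, norm_pow, Padic.norm_p, inv_pow, inv_inv, zpow_natCast]
  calc _ = ‖c‖⁻¹ * ∫ s in closedBall 0 (‖c‖ * 1), ‖G s‖ ^ 2 ∂μ := by
        rw [padicFourier_sum_smul_indicator_closedBall μ hμ,
          integral_norm_indicator_smul_sq measurableSet_closedBall,
          sq_zpow_neg_mul_rpow_half natCast_prime_pos, hnc, mul_one, zpow_neg]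
    _ = ∫ t in closedBall 0 1, ‖G (c * t)‖ ^ 2 ∂μ :=
        (setIntegral_closedBall_comp_mul_left μ hc _ 1).symm
    _ = _ := setIntegral_congr_fun measurableSet_closedBall fun t _ => by
        simp only [G, c, pow_mul']
        ring_nf

theorem stmt14 {p : ℕ} [Fact p.Prime] [MeasurableSpace ℚ_[p]] [BorelSpace ℚ_[p]]
    (μ : Measure ℚ_[p]) [μ.IsAddHaarMeasure] (hμ : μ (Metric.closedBall 0 1) = 1)
    {X : Type*} [NormedAddCommGroup X] [NormedSpace ℂ X] [CompleteSpace X]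
    (N : ℕ) (hN : 1 ≤ N) (x : ℕ → X) :
    ∫ s, ‖padicFourier μ (fun t => ∑ k ∈ Finset.range (p^(2*N)),
        (p:ℝ)^((N:ℝ)/2) • Set.indicator
          (Metric.closedBall ((k:ℚ_[p]) / (p:ℚ_[p])^N) ((p:ℝ)^(-(N:ℤ)))) (fun _ => x k) t) s‖^2 ∂μ
      = ∫ t in Metric.closedBall (0:ℚ_[p]) 1,
          ‖∑ k ∈ Finset.range (p^(2*N)), padicChar ((k:ℚ_[p]) * t / (p:ℚ_[p])^(2*N)) • x k‖^2 ∂μ :=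
  stmt14_general μ hμ N x
end

section
/- Let X be a Banach space such that the Fourier transform 𝓕 : L²(ℚ_p, X) → L²(ℚ_p, X) is bounded. Then there exists C₁ > 0 such that for every N ≥ 1 and x_0, …, x_{p^{2N}−1} ∈ X: Σ_k ‖x_k‖² ≤ C₁ ∫_{ℤ_p} ‖Σ_{k=0}^{p^{2N}−1} χ_p(kt/p^{2N}) x_k‖² dt. -/
open MeasureTheory Metric Finset
open scoped ENNReal NNReal Classical

/-!
Test the Fourier bound on `f = 1_{ℤ_p} · Σ_k χ_p(k t / p^{2N}) x_k`. By orthogonality of characters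
on `ℤ_p`, its Fourier transform is `Σ_k 1_{B(-k/p^{2N}, 1)} x_k`, and these unit balls are pairwise
disjoint and of measure one, so `‖𝓕 f‖₂² = Σ_k ‖x_k‖²` while `‖f‖₂²` is the integral on the right.
Hence the inequality holds with `C₁ = (max C 1)²`.
-/

lemma apply_sum_indicator_of_pairwiseDisjoint {α ι M N : Type*} [AddCommMonoid M] [AddCommMonoid N]
    {g : M → N} (hg : g 0 = 0) {I : Finset ι} {s : ι → Set α}
    (hs : (I : Set ι).PairwiseDisjoint s) (x : ι → M) (a : α) :
    g (∑ k ∈ I, (s k).indicator (fun _ ↦ x k) a)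
      = ∑ k ∈ I, (s k).indicator (fun _ ↦ g (x k)) a := by
  by_cases h : ∃ k ∈ I, a ∈ s k
  · obtain ⟨k, hk, hak⟩ := h
    have hother : ∀ j ∈ I, j ≠ k → a ∉ s j := fun j hj hjk haj ↦ hjk (hs.elim_set hj hk a haj hak)
    rw [sum_eq_single_of_mem k hk fun j hj hjk ↦ Set.indicator_of_notMem (hother j hj hjk) _,
      sum_eq_single_of_mem k hk fun j hj hjk ↦ Set.indicator_of_notMem (hother j hj hjk) _,
      Set.indicator_of_mem hak, Set.indicator_of_mem hak]
  · push Not at h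
    rw [sum_eq_zero fun k hk ↦ Set.indicator_of_notMem (h k hk) _,
      sum_eq_zero fun k hk ↦ Set.indicator_of_notMem (h k hk) _, hg]

namespace MeasureTheory

variable {α E : Type*} [MeasurableSpace α] {μ : Measure α} [NormedAddCommGroup E]

lemma eLpNorm_two_sq_eq_lintegral (f : α → E) :
    eLpNorm f 2 μ ^ 2 = ∫⁻ a, ‖f a‖ₑ ^ 2 ∂μ := by
  simpa [ENNReal.rpow_two] using eLpNorm_nnreal_pow_eq_lintegral (f := f) (μ := μ) two_ne_zero

lemma MemLp.eLpNorm_two_sq_eq_ofReal_integral {f : α → E} (hf : MemLp f 2 μ) :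
    eLpNorm f 2 μ ^ 2 = ENNReal.ofReal (∫ a, ‖f a‖ ^ 2 ∂μ) := by
  rw [hf.eLpNorm_eq_integral_rpow_norm two_ne_zero ENNReal.ofNat_ne_top, ← ENNReal.ofReal_pow
    (by positivity), ← Real.rpow_natCast, ← Real.rpow_mul (integral_nonneg fun _ ↦ by positivity)]
  norm_num

lemma _root_.ContinuousOn.memLp_restrict_of_isCompact [TopologicalSpace α] [OpensMeasurableSpace α]
    [IsFiniteMeasureOnCompacts μ] {F : α → E} {K : Set α} (hF : ContinuousOn F K)
    (hK : IsCompact K) (hKm : MeasurableSet K) (q : ℝ≥0∞) : MemLp F q (μ.restrict K) := by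
  obtain ⟨B, hB⟩ := hK.exists_bound_of_continuousOn hF
  have : IsFiniteMeasure (μ.restrict K) := isFiniteMeasure_restrict.mpr hK.measure_ne_top
  exact .of_bound (hF.aestronglyMeasurable_of_isCompact hK hKm) B (ae_restrict_of_forall_mem hKm hB)

lemma lintegral_enorm_sum_indicator_sq {ι : Type*} {I : Finset ι} {s : ι → Set α}
    (hs : (I : Set ι).PairwiseDisjoint s) (hsm : ∀ k ∈ I, MeasurableSet (s k)) (x : ι → E) :
    ∫⁻ a, ‖∑ k ∈ I, (s k).indicator (fun _ ↦ x k) a‖ₑ ^ 2 ∂μ = ∑ k ∈ I, ‖x k‖ₑ ^ 2 * μ (s k) := by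
  simp_rw [apply_sum_indicator_of_pairwiseDisjoint (g := fun v : E ↦ ‖v‖ₑ ^ 2) (by simp) hs]
  rw [lintegral_finsetSum _ fun k hk ↦ measurable_const.indicator (hsm k hk)]
  exact sum_congr rfl fun k hk ↦ lintegral_indicator_const (hsm k hk) _

end MeasureTheory

namespace Padic

variable {p : ℕ} [hp : Fact p.Prime]

lemma exists_padicFrac_eq (x : ℚ_[p]) :
    ∃ a n : ℕ, padicFrac x = (a : ℚ) / (p : ℚ) ^ n ∧ ‖x - (a : ℚ_[p]) / (p : ℚ_[p]) ^ n‖ ≤ 1 := by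
  set n := (-x.valuation).toNat
  have hx : ‖x * (p : ℚ_[p]) ^ n‖ ≤ 1 := by
    rcases eq_or_ne x 0 with rfl | hx
    · simp
    rw [norm_mul, norm_p_pow, norm_eq_zpow_neg_valuation hx, ← zpow_add₀ (by simp [hp.out.ne_zero])]
    exact zpow_le_one_of_nonpos₀ (by exact_mod_cast hp.out.one_le) (by grind [Int.self_le_toNat])
  set z : ℤ_[p] := ⟨x * (p : ℚ_[p]) ^ n, hx⟩
  refine ⟨z.appr n, n, by rw [padicFrac, dif_pos hx], ?_⟩
  obtain ⟨w, hw⟩ := Ideal.mem_span_singleton'.mp (z.appr_spec n)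
  have hw' : x * (p : ℚ_[p]) ^ n - (z.appr n : ℚ_[p]) = (w : ℚ_[p]) * (p : ℚ_[p]) ^ n := by
    simpa using (congrArg ((↑) : ℤ_[p] → ℚ_[p]) hw).symm
  have hp0 : (p : ℚ_[p]) ≠ 0 := by exact_mod_cast hp.out.ne_zero
  have : x - (z.appr n : ℚ_[p]) / (p : ℚ_[p]) ^ n = w := by
    field_simp
    linear_combination hw'
  exact this ▸ w.2

lemma exists_int_div_pow_eq_add {K : Type*} [Field K] [CharZero K] {a b : ℤ} {n m : ℕ}
    (h : ‖(a : ℚ_[p]) / (p : ℚ_[p]) ^ n - (b : ℚ_[p]) / (p : ℚ_[p]) ^ m‖ ≤ 1) :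
    ∃ k : ℤ, (a : K) / (p : K) ^ n = (b : K) / (p : K) ^ m + k := by
  have hpQ : (p : ℚ_[p]) ≠ 0 := by exact_mod_cast hp.out.ne_zero
  have hpK : (p : K) ≠ 0 := by exact_mod_cast hp.out.ne_zero
  have hnorm : ‖((a * p ^ m - b * p ^ n : ℤ) : ℚ_[p])‖ ≤ (p : ℝ) ^ (-(n + m : ℕ) : ℤ) := by
    have : ((a * p ^ m - b * p ^ n : ℤ) : ℚ_[p]) =
        ((a : ℚ_[p]) / (p : ℚ_[p]) ^ n - (b : ℚ_[p]) / (p : ℚ_[p]) ^ m) *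
          (p : ℚ_[p]) ^ (n + m) := by
      field_simp
      push_cast
      ring
    rw [this, norm_mul, norm_p_pow]
    exact mul_le_of_le_one_left (by positivity) h
  obtain ⟨k, hk⟩ := (norm_int_le_pow_iff_dvd _ _).mp hnorm
  refine ⟨k, ?_⟩
  have hkK : (a : K) * p ^ m - b * p ^ n = p ^ (n + m) * k := by exact_mod_cast hk
  field_simp
  linear_combination hkK

lemma padicChar_eq_exp {x : ℚ_[p]} {a : ℤ} {n : ℕ}
    (h : ‖x - (a : ℚ_[p]) / (p : ℚ_[p]) ^ n‖ ≤ 1) :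
    padicChar x = Complex.exp (2 * Real.pi * Complex.I * ((a : ℂ) / (p : ℂ) ^ n)) := by
  obtain ⟨b, m, hfrac, hb⟩ := exists_padicFrac_eq x
  have hab : ‖(a : ℚ_[p]) / (p : ℚ_[p]) ^ n - ((b : ℤ) : ℚ_[p]) / (p : ℚ_[p]) ^ m‖ ≤ 1 := by
    rw [show (a : ℚ_[p]) / (p : ℚ_[p]) ^ n - ((b : ℤ) : ℚ_[p]) / (p : ℚ_[p]) ^ m
        = -(x - (a : ℚ_[p]) / (p : ℚ_[p]) ^ n) + (x - (b : ℚ_[p]) / (p : ℚ_[p]) ^ m) by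
      push_cast; ring]
    exact (IsUltrametricDist.norm_add_le_max _ _).trans (max_le (by rwa [norm_neg]) hb)
  obtain ⟨k, hk⟩ := exists_int_div_pow_eq_add (K := ℂ) hab
  rw [padicChar, hfrac, hk, mul_add, Complex.exp_add]
  push_cast
  rw [show 2 * Real.pi * Complex.I * k = k * (2 * Real.pi * Complex.I) by ring,
    Complex.exp_int_mul_two_pi_mul_I, mul_one]

lemma norm_padicChar (x : ℚ_[p]) : ‖padicChar x‖ = 1 := by
  rw [padicChar, show 2 * Real.pi * Complex.I * ((padicFrac x : ℚ) : ℂ)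
    = ((2 * Real.pi * (padicFrac x : ℝ) : ℝ) : ℂ) * Complex.I by push_cast; ring]
  exact Complex.norm_exp_ofReal_mul_I _

lemma padicChar_eq_one {x : ℚ_[p]} (h : ‖x‖ ≤ 1) : padicChar x = 1 := by
  simpa using padicChar_eq_exp (a := 0) (n := 0) (by simpa using h)

lemma padicChar_add (x y : ℚ_[p]) : padicChar (x + y) = padicChar x * padicChar y := by
  have hpQ : (p : ℚ_[p]) ≠ 0 := by exact_mod_cast hp.out.ne_zero
  obtain ⟨a, n, -, ha⟩ := exists_padicFrac_eq x
  obtain ⟨b, m, -, hb⟩ := exists_padicFrac_eq y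
  have hsum : ‖x + y - ((a * p ^ m + b * p ^ n : ℤ) : ℚ_[p]) / (p : ℚ_[p]) ^ (n + m)‖ ≤ 1 := by
    have : x + y - ((a * p ^ m + b * p ^ n : ℤ) : ℚ_[p]) / (p : ℚ_[p]) ^ (n + m)
        = (x - (a : ℚ_[p]) / (p : ℚ_[p]) ^ n) + (y - (b : ℚ_[p]) / (p : ℚ_[p]) ^ m) := by
      field_simp
      push_cast
      ring
    rw [this]
    exact (IsUltrametricDist.norm_add_le_max _ _).trans (max_le ha hb)
  rw [padicChar_eq_exp hsum, padicChar_eq_exp (a := a) (by simpa using ha),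
    padicChar_eq_exp (a := b) (by simpa using hb), ← Complex.exp_add]
  have hpC : (p : ℂ) ≠ 0 := by exact_mod_cast hp.out.ne_zero
  congr 1
  push_cast
  field_simp
  ring

lemma padicChar_eq_of_norm_sub_le {x y : ℚ_[p]} (h : ‖x - y‖ ≤ 1) : padicChar x = padicChar y := by
  rw [← sub_add_cancel x y, padicChar_add, padicChar_eq_one h, one_mul]

lemma continuous_padicChar : Continuous (padicChar (p := p)) :=
  continuous_iff_continuousAt.mpr fun x ↦ Filter.EventuallyEq.continuousAt <| by
    filter_upwards [closedBall_mem_nhds x one_pos] with y hy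
    exact padicChar_eq_of_norm_sub_le (by simpa [dist_eq_norm] using hy)

/-- Take `u = (p a)⁻¹`: then `a u = 1/p`, where the character is `e^{2πi/p}`. -/
lemma exists_padicChar_mul_ne_one {a : ℚ_[p]} (ha : 1 < ‖a‖) :
    ∃ u : ℚ_[p], ‖u‖ ≤ 1 ∧ padicChar (a * u) ≠ 1 := by
  have hp0 : (p : ℚ_[p]) ≠ 0 := by exact_mod_cast hp.out.ne_zero
  have ha0 : a ≠ 0 := norm_pos_iff.mp (one_pos.trans ha)
  refine ⟨(p * a)⁻¹, ?_, ?_⟩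
  · have hpa : (p : ℝ) ≤ ‖a‖ := by
      have hp1 : (1 : ℝ) < p := by exact_mod_cast hp.out.one_lt
      rw [norm_eq_zpow_neg_valuation ha0] at ha ⊢
      have : 0 < -a.valuation := (one_lt_zpow_iff_right₀ hp1).mp ha
      simpa using zpow_le_zpow_right₀ hp1.le (show (1 : ℤ) ≤ -a.valuation by omega)
    rw [norm_inv, norm_mul, norm_p, inv_mul_eq_div, inv_div]
    exact div_le_one_of_le₀ hpa (by positivity)
  · rw [show a * (p * a)⁻¹ = ((1 : ℤ) : ℚ_[p]) / (p : ℚ_[p]) ^ 1 by field_simp; simp,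
      padicChar_eq_exp (a := 1) (n := 1) (by simp)]
    simpa [div_eq_mul_inv] using (Complex.isPrimitiveRoot_exp p hp.out.ne_zero).ne_one hp.out.one_lt

lemma pairwiseDisjoint_closedBall_neg_natCast_div (n : ℕ) :
    ((range (p ^ n) : Finset ℕ) : Set ℕ).PairwiseDisjoint
      fun k ↦ closedBall (-((k : ℚ_[p]) / (p : ℚ_[p]) ^ n)) 1 := by
  intro k hk j hj hkj
  refine Set.disjoint_left.mpr fun t htk htj ↦ hkj ?_
  have hdist : dist (-((k : ℚ_[p]) / (p : ℚ_[p]) ^ n)) (-((j : ℚ_[p]) / (p : ℚ_[p]) ^ n)) ≤ 1 :=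
    (IsUltrametricDist.dist_triangle_max _ t _).trans
      (max_le (by rwa [dist_comm]) htj)
  have hnorm : ‖(((j : ℤ) - k : ℤ) : ℚ_[p])‖ ≤ (p : ℝ) ^ (-(n : ℤ)) := by
    rw [dist_eq_norm, neg_sub_neg, ← sub_div, norm_div, norm_p_pow,
      div_le_one (zpow_pos (by exact_mod_cast hp.out.pos) _)] at hdist
    simpa using hdist
  have hmod : k ≡ j [MOD p ^ n] :=
    Nat.modEq_iff_dvd.mpr (by exact_mod_cast (norm_int_le_pow_iff_dvd _ _).mp hnorm)
  exact hmod.eq_of_lt_of_lt (mem_range.mp hk) (mem_range.mp hj)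

section Integration

variable [MeasurableSpace ℚ_[p]] [BorelSpace ℚ_[p]] (μ : Measure ℚ_[p]) [μ.IsAddHaarMeasure]

/-- If `‖a‖ > 1`, translating by some `u ∈ ℤ_p` multiplies the integral by `χ(a u) ≠ 1`. -/
lemma setIntegral_closedBall_padicChar_mul (hμ : μ (closedBall 0 1) = 1) (a : ℚ_[p]) :
    ∫ t in closedBall (0 : ℚ_[p]) 1, padicChar (a * t) ∂μ = if ‖a‖ ≤ 1 then 1 else 0 := by
  split_ifs with ha
  · rw [setIntegral_congr_fun measurableSet_closedBall (g := fun _ ↦ (1 : ℂ)) fun t ht ↦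
      padicChar_eq_one ?_]
    · simp [measureReal_def, hμ]
    · rw [norm_mul]
      exact mul_le_one₀ ha (norm_nonneg _) (by simpa using ht)
  obtain ⟨u, hu, hne⟩ := exists_padicChar_mul_ne_one (not_le.mp ha)
  have hball : (· + u) ⁻¹' closedBall (0 : ℚ_[p]) 1 = closedBall 0 1 := by
    rw [Metric.preimage_add_right_closedBall, zero_sub]
    exact IsUltrametricDist.closedBall_eq_of_mem (by simpa using hu)
  set I := ∫ t in closedBall (0 : ℚ_[p]) 1, padicChar (a * t) ∂μ
  have hshift : I = padicChar (a * u) * I := calc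
    I = ∫ t in (· + u) ⁻¹' closedBall 0 1, padicChar (a * (t + u)) ∂μ :=
      ((measurePreserving_add_right μ u).setIntegral_preimage_emb
        (measurableEmbedding_addRight u) _ _).symm
    _ = padicChar (a * u) * I := by
      rw [hball, ← integral_const_mul]
      simp_rw [mul_add, padicChar_add, mul_comm]
  by_contra hI
  exact hne ((mul_eq_right₀ hI).mp hshift.symm)

variable {X : Type*} [NormedAddCommGroup X] [NormedSpace ℂ X] [CompleteSpace X]

lemma padicFourier_indicator_sum (hμ : μ (closedBall 0 1) = 1) {ι : Type*} (I : Finset ι)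
    (ξ : ι → ℚ_[p]) (x : ι → X) (s : ℚ_[p]) :
    padicFourier μ ((closedBall 0 1).indicator fun t ↦ ∑ k ∈ I, padicChar (ξ k * t) • x k) s
      = ∑ k ∈ I, (closedBall (-ξ k) 1).indicator (fun _ ↦ x k) s := by
  have hint : ∀ k ∈ I, IntegrableOn (fun t ↦ padicChar ((s + ξ k) * t) • x k) (closedBall 0 1) μ :=
    fun k _ ↦ ((continuous_padicChar.comp (continuous_const_mul _)).smul
      continuous_const).continuousOn.integrableOn_compact (isCompact_closedBall 0 1)
  calc padicFourier μ ((closedBall 0 1).indicator fun t ↦ ∑ k ∈ I, padicChar (ξ k * t) • x k) s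
      = ∫ t in closedBall 0 1, ∑ k ∈ I, padicChar ((s + ξ k) * t) • x k ∂μ := by
        rw [padicFourier, ← integral_indicator measurableSet_closedBall]
        congr 1
        ext t
        by_cases ht : t ∈ closedBall (0 : ℚ_[p]) 1
        · simp [ht, Finset.smul_sum, smul_smul, add_mul, padicChar_add]
        · simp [ht]
    _ = ∑ k ∈ I, (closedBall (-ξ k) 1).indicator (fun _ ↦ x k) s := by
        rw [integral_finsetSum _ hint]
        refine sum_congr rfl fun k _ ↦ ?_
        rw [integral_smul_const, setIntegral_closedBall_padicChar_mul μ hμ]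
        simp [Set.indicator_apply, dist_eq_norm]

lemma eLpNorm_padicFourier_indicator_sq (hμ : μ (closedBall 0 1) = 1) (n : ℕ) (x : ℕ → X) :
    eLpNorm (padicFourier μ ((closedBall 0 1).indicator fun t ↦
        ∑ k ∈ range (p ^ n), padicChar ((k : ℚ_[p]) / (p : ℚ_[p]) ^ n * t) • x k)) 2 μ ^ 2
      = ENNReal.ofReal (∑ k ∈ range (p ^ n), ‖x k‖ ^ 2) := by
  simp_rw [eLpNorm_two_sq_eq_lintegral, padicFourier_indicator_sum μ hμ]
  rw [lintegral_enorm_sum_indicator_sq (pairwiseDisjoint_closedBall_neg_natCast_div n)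
    fun _ _ ↦ measurableSet_closedBall, ENNReal.ofReal_sum_of_nonneg fun _ _ ↦ by positivity]
  refine sum_congr rfl fun k _ ↦ ?_
  rw [Measure.addHaar_closedBall_center, hμ, mul_one, ENNReal.ofReal_pow (norm_nonneg _),
    ofReal_norm]

end Integration

end Padic

theorem stmt16 {p : ℕ} [Fact p.Prime] [MeasurableSpace ℚ_[p]] [BorelSpace ℚ_[p]]
    (μ : Measure ℚ_[p]) [μ.IsAddHaarMeasure] (hμ : μ (Metric.closedBall 0 1) = 1)
    {X : Type*} [NormedAddCommGroup X] [NormedSpace ℂ X] [CompleteSpace X]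
    (C : ℝ)
    (hbd : ∀ f : ℚ_[p] → X, Integrable f μ → MemLp f 2 μ →
      eLpNorm (padicFourier μ f) 2 μ ≤ ENNReal.ofReal C * eLpNorm f 2 μ) :
    ∃ C₁ : ℝ, 0 < C₁ ∧ ∀ (N : ℕ), 1 ≤ N → ∀ x : ℕ → X,
      ∑ k ∈ Finset.range (p^(2*N)), ‖x k‖^2
        ≤ C₁ * ∫ t in Metric.closedBall (0:ℚ_[p]) 1,
            ‖∑ k ∈ Finset.range (p^(2*N)), padicChar ((k:ℚ_[p]) * t / (p:ℚ_[p])^(2*N)) • x k‖^2 ∂μ := by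
  refine ⟨max C 1 ^ 2, by positivity, fun N _ x ↦ ?_⟩
  set F : ℚ_[p] → X := fun t ↦
    ∑ k ∈ range (p ^ (2 * N)), padicChar ((k : ℚ_[p]) / (p : ℚ_[p]) ^ (2 * N) * t) • x k
  have hF : Continuous F := continuous_finsetSum _ fun k _ ↦
    (Padic.continuous_padicChar.comp (continuous_const_mul _)).smul continuous_const
  have hFL (q : ℝ≥0∞) : MemLp F q (μ.restrict (closedBall 0 1)) :=
    hF.continuousOn.memLp_restrict_of_isCompact (isCompact_closedBall 0 1)
      measurableSet_closedBall q
  have hf (q : ℝ≥0∞) : MemLp ((closedBall 0 1).indicator F) q μ :=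
    (memLp_indicator_iff_restrict measurableSet_closedBall).mpr (hFL q)
  have hbd' := (hbd _ (memLp_one_iff_integrable.mp (hf 1)) (hf 2)).trans
    (mul_le_mul_left (ENNReal.ofReal_le_ofReal (le_max_left C 1)) _)
  have hineq := pow_le_pow_left₀ (by positivity) hbd' 2
  rw [mul_pow, Padic.eLpNorm_padicFourier_indicator_sq μ hμ,
    eLpNorm_indicator_eq_eLpNorm_restrict measurableSet_closedBall,
    (hFL 2).eLpNorm_two_sq_eq_ofReal_integral, ← ENNReal.ofReal_pow (by positivity),
    ← ENNReal.ofReal_mul (by positivity), ENNReal.ofReal_le_ofReal_iff (by positivity)] at hineq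
  simpa only [F, mul_div_right_comm] using hineq
end
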